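/- For p > 1, and a finite measure σ on the unit sphere S^{d-1} of ℝ^d not concentrated on the intersection of S^{d-1} with any (d-1)-dimensional linear subspace, the function u ↦ (∫_{S^{d-1}} |⟨u,z⟩|^p σ(dz))^{1/p} is differentiable at every u ≠ 0. -/

import Mathlib

open MeasureTheory Real
open scoped RealInnerProductSpace

/-!
Writing `ℓ_z = ⟪·, z⟫`, the integrand `w ↦ |ℓ_z w| ^ p` is differentiable for `p > 1` with
derivative `p |ℓ_z w| ^ (p - 2) ℓ_z w • ℓ_z`, whose norm `p |ℓ_z w| ^ (p - 1)` is bounded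
uniformly in `z` for `w` near `u`; so the integral can be differentiated under the integral sign.
Since `σ` charges `{z | ⟪u, z⟫ ≠ 0}`, the integral is positive at `u ≠ 0`, where `t ↦ t ^ (1 / p)`
is differentiable.
-/

lemma abs_abs_rpow_sub_two_mul_self {p : ℝ} (hp : p ≠ 1) (t : ℝ) :
    |(|t| ^ (p - 2) * t)| = |t| ^ (p - 1) := by
  rcases eq_or_ne t 0 with rfl | ht
  · simp [zero_rpow (sub_ne_zero.mpr hp)]
  · rw [abs_mul, abs_of_nonneg (rpow_nonneg (abs_nonneg t) _),
      ← rpow_add_one (abs_ne_zero.mpr ht)]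
    ring_nf

section LinearFunctional

variable {E : Type*} [NormedAddCommGroup E] [NormedSpace ℝ E] {p : ℝ}

lemma ContinuousLinearMap.hasFDerivAt_abs_rpow (ℓ : E →L[ℝ] ℝ) (hp : 1 < p) (w : E) :
    HasFDerivAt (fun w => |ℓ w| ^ p) ((p * |ℓ w| ^ (p - 2) * ℓ w) • ℓ) w :=
  (hasDerivAt_abs_rpow (ℓ w) hp).comp_hasFDerivAt w ℓ.hasFDerivAt

lemma ContinuousLinearMap.norm_abs_rpow_fderiv (ℓ : E →L[ℝ] ℝ) (hp : 1 < p) (w : E) :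
    ‖(p * |ℓ w| ^ (p - 2) * ℓ w) • ℓ‖ = p * |ℓ w| ^ (p - 1) * ‖ℓ‖ := by
  rw [norm_smul, mul_assoc, norm_mul, Real.norm_eq_abs, Real.norm_eq_abs,
    abs_abs_rpow_sub_two_mul_self hp.ne', abs_of_pos (by linarith)]

end LinearFunctional

section Integral

variable {α E : Type*} [MeasurableSpace α] [NormedAddCommGroup E] [NormedSpace ℝ E]
  {μ : Measure α} [IsFiniteMeasure μ] {L : α → E →L[ℝ] ℝ} {p C : ℝ}

lemma integrable_abs_apply_rpow (hL : AEStronglyMeasurable L μ)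
    (hC : ∀ᵐ z ∂μ, ‖L z‖ ≤ C) (hp : 0 ≤ p) (w : E) :
    Integrable (fun z => |L z w| ^ p) μ := by
  refine (integrable_const ((C * ‖w‖) ^ p)).mono' ?_ ?_
  · exact (continuous_abs.rpow_const fun _ => Or.inr hp).comp_aestronglyMeasurable
      (hL.apply_continuousLinearMap w)
  · filter_upwards [hC] with z hz
    rw [Real.norm_eq_abs, abs_of_nonneg (rpow_nonneg (abs_nonneg _) _)]
    exact rpow_le_rpow (abs_nonneg _)
      ((L z).le_opNorm w |>.trans (by gcongr)) hp

lemma hasFDerivAt_integral_abs_apply_rpow (hL : AEStronglyMeasurable L μ)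
    (hC : ∀ᵐ z ∂μ, ‖L z‖ ≤ C) (hp : 1 < p) (u : E) :
    HasFDerivAt (fun w => ∫ z, |L z w| ^ p ∂μ)
      (∫ z, (p * |L z u| ^ (p - 2) * L z u) • L z ∂μ) u := by
  refine hasFDerivAt_integral_of_dominated_of_fderiv_le (Metric.ball_mem_nhds u one_pos)
    (bound := fun _ => p * (C * (‖u‖ + 1)) ^ (p - 1) * C)
    (.of_forall fun w => (integrable_abs_apply_rpow hL hC (by linarith) w).1)
    (integrable_abs_apply_rpow hL hC (by linarith) u) ?_ ?_ (integrable_const _)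
    (.of_forall fun z w _ => (L z).hasFDerivAt_abs_rpow hp w)
  · have hmeas : Measurable fun t : ℝ => p * |t| ^ (p - 2) * t := by fun_prop
    have hcoeff := hmeas.comp_aemeasurable (hL.apply_continuousLinearMap u).aemeasurable
    exact hcoeff.aestronglyMeasurable.smul hL
  · filter_upwards [hC] with z hz w hw
    have hC0 : 0 ≤ C := (norm_nonneg _).trans hz
    have hw_norm : ‖w‖ ≤ ‖u‖ + 1 := by
      have := norm_le_norm_add_norm_sub' w u
      rw [Metric.mem_ball, dist_eq_norm] at hw
      linarith
    rw [(L z).norm_abs_rpow_fderiv hp]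
    gcongr
    exact (L z).le_opNorm w |>.trans (by gcongr)

lemma integral_abs_apply_rpow_pos (hL : AEStronglyMeasurable L μ)
    (hC : ∀ᵐ z ∂μ, ‖L z‖ ≤ C) (hp : 0 < p) {u : E} (hu : 0 < μ {z | L z u ≠ 0}) :
    0 < ∫ z, |L z u| ^ p ∂μ := by
  rw [integral_pos_iff_support_of_nonneg (fun z => rpow_nonneg (abs_nonneg _) _)
    (integrable_abs_apply_rpow hL hC hp.le u)]
  convert hu using 2
  ext z
  simp [rpow_eq_zero (abs_nonneg _) hp.ne']

end Integral

/-- For `p > 1` and a finite measure `σ` on the unit sphere of `ℝ^d` not concentrated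
on a great subsphere, the `p`-cosine transform norm
`u ↦ (∫ |⟨u,z⟩|^p dσ(z))^{1/p}` is differentiable at every `u ≠ 0`. -/
theorem lp_norm_differentiable {d : ℕ} (p : ℝ) (hp : 1 < p)
    (σ : Measure (Metric.sphere (0 : EuclideanSpace ℝ (Fin d)) 1)) [IsFiniteMeasure σ]
    (hfull : ∀ v : EuclideanSpace ℝ (Fin d), v ≠ 0 →
      0 < σ {z | ⟪v, (z : EuclideanSpace ℝ (Fin d))⟫ ≠ 0})
    (u : EuclideanSpace ℝ (Fin d)) (hu : u ≠ 0) :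
    DifferentiableAt ℝ (fun w : EuclideanSpace ℝ (Fin d) =>
      (∫ z, |⟪w, (z : EuclideanSpace ℝ (Fin d))⟫| ^ p ∂σ) ^ (1 / p)) u := by
  -- `L z w` is `⟪w, z⟫` by definition, so the lemmas above apply to the integrand as it stands.
  set L : Metric.sphere (0 : EuclideanSpace ℝ (Fin d)) 1 → EuclideanSpace ℝ (Fin d) →L[ℝ] ℝ :=
    fun z => (innerSL ℝ).flip z
  have hL : AEStronglyMeasurable L σ :=
    ((innerSL ℝ).flip.continuous.comp continuous_subtype_val).aestronglyMeasurable
  have hC : ∀ᵐ z ∂σ, ‖L z‖ ≤ 1 := .of_forall fun z => by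
    have hLz : L z = innerSL ℝ (z : EuclideanSpace ℝ (Fin d)) :=
      ContinuousLinearMap.ext fun w => real_inner_comm (z : EuclideanSpace ℝ (Fin d)) w
    rw [hLz, innerSL_apply_norm, norm_eq_of_mem_sphere z]
  have hpos := integral_abs_apply_rpow_pos hL hC (by linarith) (hfull u hu)
  exact (hasFDerivAt_integral_abs_apply_rpow hL hC hp u).differentiableAt.rpow_const
    (Or.inl hpos.ne')
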